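/- arXiv:1004.4849 — 3 statements merged into one kernel-verified Lean document; each statement's English description precedes it below -/
import Mathlib

section
/- For all positive integers n, k, l with l ≤ ⌊n/k⌋, p(n, k, l) = Σ_{d | gcd(n,l)} p_Ψ(n/d, k, l/d), and equivalently p_Ψ(n, k, l) = Σ_{d | gcd(n,l)} μ(d)·p(n/d, k, l/d), where the sums range over positive common divisors d of n and l and μ is the Möbius function. -/
open Finset ArithmeticFunction
open scoped ArithmeticFunction.Moebius

/-- `p(n)`: the number of (unrestricted) partitions of `n`. -/
def pP (n : ℕ) : ℕ := Fintype.card (Nat.Partition n)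

/-- `p_{Ψ(m)}(n)`: the number of partitions of `n` relatively prime to `m`. -/
def pPsiM (m n : ℕ) : ℕ :=
  ((univ : Finset (Nat.Partition n)).filter fun p => Nat.gcd p.parts.gcd m = 1).card

/-- `p_Ψ(n)`: the number of relatively prime partitions of `n`. -/
def pPsi (n : ℕ) : ℕ :=
  ((univ : Finset (Nat.Partition n)).filter fun p => p.parts.gcd = 1).card

/-- `p(n,k)`: the number of partitions of `n` into exactly `k` parts. -/
def pPk (n k : ℕ) : ℕ :=
  ((univ : Finset (Nat.Partition n)).filter fun p => Multiset.card p.parts = k).card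

/-- `p_{Ψ(m)}(n,k)`: partitions of `n` into exactly `k` parts, relatively prime to `m`. -/
def pPsiMk (m n k : ℕ) : ℕ :=
  ((univ : Finset (Nat.Partition n)).filter fun p =>
    Multiset.card p.parts = k ∧ Nat.gcd p.parts.gcd m = 1).card

/-- `p_Ψ(n,k)`: relatively prime partitions of `n` into exactly `k` parts. -/
def pPsik (n k : ℕ) : ℕ :=
  ((univ : Finset (Nat.Partition n)).filter fun p =>
    Multiset.card p.parts = k ∧ p.parts.gcd = 1).card

/-- `p(n,k,l)`: partitions of `n` into exactly `k` parts whose smallest part is `l`. -/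
def pPkl (n k l : ℕ) : ℕ :=
  ((univ : Finset (Nat.Partition n)).filter fun p =>
    Multiset.card p.parts = k ∧ l ∈ p.parts ∧ ∀ x ∈ p.parts, l ≤ x).card

/-- `p_{Ψ(m)}(n,k,l)`: partitions of `n` into exactly `k` parts, relatively prime to `m`,
whose smallest part is `l`. -/
def pPsiMkl (m n k l : ℕ) : ℕ :=
  ((univ : Finset (Nat.Partition n)).filter fun p =>
    Multiset.card p.parts = k ∧ (l ∈ p.parts ∧ ∀ x ∈ p.parts, l ≤ x) ∧
      Nat.gcd p.parts.gcd m = 1).card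

/-- `p_Ψ(n,k,l)`: relatively prime partitions of `n` into exactly `k` parts whose
smallest part is `l`. -/
def pPsikl (n k l : ℕ) : ℕ :=
  ((univ : Finset (Nat.Partition n)).filter fun p =>
    Multiset.card p.parts = k ∧ (l ∈ p.parts ∧ ∀ x ∈ p.parts, l ≤ x) ∧
      p.parts.gcd = 1).card

/-- `p(n,k,≥l)`: partitions of `n` into exactly `k` parts none of which is smaller than `l`. -/
def pPkge (n k l : ℕ) : ℕ :=
  ((univ : Finset (Nat.Partition n)).filter fun p =>
    Multiset.card p.parts = k ∧ ∀ x ∈ p.parts, l ≤ x).card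

/-- `p_{Ψ(m)}(n,k,≥l)`: partitions of `n` into exactly `k` parts, relatively prime to `m`,
none of which is smaller than `l`. -/
def pPsiMkge (m n k l : ℕ) : ℕ :=
  ((univ : Finset (Nat.Partition n)).filter fun p =>
    Multiset.card p.parts = k ∧ (∀ x ∈ p.parts, l ≤ x) ∧
      Nat.gcd p.parts.gcd m = 1).card

/-!
Grouping the partitions counted by `p(n,k,l)` according to the gcd `d` of their parts gives the
first identity: dividing every part by `d` is a bijection onto the relatively prime partitions of
`n/d` into `k` parts with smallest part `l/d`, and `d` runs over the common divisors of `n` and `l`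
because `l` is a part and `n` is the sum of the parts. Since `gcd(n/d, l/d) = gcd(n,l)/d`, the
first identity holds at every `(n/d, l/d)`, and Möbius inversion over the divisors of `gcd(n,l)`
gives the second.
-/

namespace Nat.Partition

def scale {m : ℕ} (q : m.Partition) {d : ℕ} (hd : 0 < d) : (d * m).Partition where
  parts := q.parts.map (d * ·)
  parts_pos hi := by
    obtain ⟨x, hx, rfl⟩ := Multiset.mem_map.1 hi
    exact Nat.mul_pos hd (q.parts_pos hx)
  parts_sum := by rw [Multiset.sum_map_mul_left, Multiset.map_id', q.parts_sum]

variable {m d : ℕ} (hd : 0 < d)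

theorem scale_parts (q : m.Partition) : (q.scale hd).parts = q.parts.map (d * ·) := rfl

theorem scale_injective : Function.Injective (scale (m := m) · hd) := fun _ _ h =>
  Nat.Partition.ext <| Multiset.map_injective (mul_right_injective₀ hd.ne')
    (congrArg Nat.Partition.parts h)

theorem exists_scale_eq (p : (d * m).Partition) (hdvd : ∀ x ∈ p.parts, d ∣ x) :
    ∃ q : m.Partition, q.scale hd = p := by
  have hparts : (p.parts.map (· / d)).map (d * ·) = p.parts := by
    rw [Multiset.map_map]
    exact (Multiset.map_congr rfl fun x hx => Nat.mul_div_cancel' (hdvd x hx)).trans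
      (Multiset.map_id _)
  refine ⟨⟨p.parts.map (· / d), ?_, ?_⟩, Nat.Partition.ext hparts⟩
  · intro y hy
    obtain ⟨x, hx, rfl⟩ := Multiset.mem_map.1 hy
    exact Nat.div_pos (Nat.le_of_dvd (p.parts_pos hx) (hdvd x hx)) hd
  · apply Nat.eq_of_mul_eq_mul_left hd
    have hsum := congrArg Multiset.sum hparts
    rwa [Multiset.sum_map_mul_left, Multiset.map_id', p.parts_sum] at hsum

theorem scale_gcd (q : m.Partition) : (q.scale hd).parts.gcd = d * q.parts.gcd := by
  rw [scale_parts, Multiset.gcd_map_mul, normalize_eq]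

theorem scale_card_parts (q : m.Partition) :
    Multiset.card (q.scale hd).parts = Multiset.card q.parts :=
  Multiset.card_map _ _

theorem smallest_part_scale_iff (q : m.Partition) (j : ℕ) :
    (d * j ∈ (q.scale hd).parts ∧ ∀ x ∈ (q.scale hd).parts, d * j ≤ x) ↔
      (j ∈ q.parts ∧ ∀ x ∈ q.parts, j ≤ x) := by
  simp only [scale_parts, Multiset.mem_map_of_injective (mul_right_injective₀ hd.ne'),
    Multiset.forall_mem_map_iff, Nat.mul_le_mul_left_iff hd]

end Nat.Partition

open Nat.Partition in
theorem card_filter_gcd_eq_eq_pPsikl (m k j : ℕ) {d : ℕ} (hd : 0 < d) :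
    #{p : (d * m).Partition | (Multiset.card p.parts = k ∧ d * j ∈ p.parts ∧
      ∀ x ∈ p.parts, d * j ≤ x) ∧ p.parts.gcd = d} = pPsikl m k j := by
  rw [pPsikl, eq_comm, ← Finset.card_map ⟨(scale · hd), scale_injective hd⟩]
  refine congrArg Finset.card (Finset.ext fun p => ?_)
  simp only [Finset.mem_map, Finset.mem_filter, Finset.mem_univ, true_and,
    Function.Embedding.coeFn_mk]
  constructor
  · rintro ⟨q, ⟨hcard, hsmallest, hgcd⟩, rfl⟩
    rw [scale_card_parts, smallest_part_scale_iff, scale_gcd, hgcd, mul_one]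
    exact ⟨⟨hcard, hsmallest⟩, rfl⟩
  · rintro ⟨hpred, hgcd⟩
    obtain ⟨q, rfl⟩ := exists_scale_eq hd p fun x hx => hgcd ▸ Multiset.gcd_dvd hx
    rw [scale_card_parts, smallest_part_scale_iff] at hpred
    rw [scale_gcd] at hgcd
    have hcoprime : q.parts.gcd = 1 := Nat.eq_of_mul_eq_mul_left hd (hgcd.trans (mul_one d).symm)
    exact ⟨q, ⟨hpred.1, hpred.2, hcoprime⟩, rfl⟩

theorem pPkl_eq_sum_gcd_divisors (n k l : ℕ) :
    pPkl n k l = ∑ d ∈ (Nat.gcd n l).divisors, pPsikl (n / d) k (l / d) := by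
  rw [pPkl, card_eq_sum_card_fiberwise (f := fun p : n.Partition => p.parts.gcd)
    (t := (Nat.gcd n l).divisors)]
  · refine Finset.sum_congr rfl fun d hd => ?_
    have hd0 := Nat.pos_of_mem_divisors hd
    obtain ⟨⟨m, rfl⟩, ⟨j, rfl⟩⟩ := Nat.dvd_gcd_iff.1 (Nat.dvd_of_mem_divisors hd)
    rw [Finset.filter_filter, Nat.mul_div_cancel_left _ hd0, Nat.mul_div_cancel_left _ hd0]
    exact card_filter_gcd_eq_eq_pPsikl m k j hd0
  · rintro p hp
    obtain ⟨-, hl, -⟩ := (Finset.mem_filter.1 hp).2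
    have hgcd_dvd_n : p.parts.gcd ∣ n := by
      simpa only [p.parts_sum] using Multiset.dvd_sum fun x hx => Multiset.gcd_dvd (s := p.parts) hx
    exact Nat.mem_divisors.2 ⟨Nat.dvd_gcd hgcd_dvd_n (Multiset.gcd_dvd hl),
      Nat.gcd_ne_zero_right (p.parts_pos hl).ne'⟩

theorem sum_moebius_mul_sum_divisors_div {N : ℕ} (hN : N ≠ 0) (h : ℕ → ℤ) :
    ∑ d ∈ N.divisors, μ d * ∑ e ∈ (N / d).divisors, h (d * e) = h 1 := by
  have hinner : ∀ d ∈ N.divisors,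
      ∑ e ∈ (N / d).divisors, h (d * e) = ∑ i ∈ (N / d).divisors, h (N / i) := by
    intro d hd
    rw [← Nat.sum_div_divisors]
    refine Finset.sum_congr rfl fun e he => congrArg h ?_
    refine (Nat.div_eq_of_eq_mul_left (Nat.pos_of_mem_divisors he) ?_).symm
    rw [mul_assoc, Nat.div_mul_cancel (Nat.dvd_of_mem_divisors he),
      Nat.mul_div_cancel' (Nat.dvd_of_mem_divisors hd)]
  have inversion := (sum_eq_iff_sum_mul_moebius_eq (f := fun i => h (N / i))
    (g := fun m => ∑ i ∈ m.divisors, h (N / i))).1 (fun _ _ => rfl) N (Nat.pos_of_ne_zero hN)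
  simp only [Int.cast_id] at inversion
  rw [Nat.sum_divisorsAntidiagonal (fun a b => μ a * ∑ i ∈ b.divisors, h (N / i)),
    Nat.div_self (Nat.pos_of_ne_zero hN)] at inversion
  rw [← inversion]
  exact Finset.sum_congr rfl fun d hd => by rw [hinner d hd]

theorem pkl_eq_sum_pPsikl_general (n k l : ℕ) (hl : 0 < l) :
    pPkl n k l = ∑ d ∈ (Nat.gcd n l).divisors, pPsikl (n / d) k (l / d) ∧
    (pPsikl n k l : ℤ) =
      ∑ d ∈ (Nat.gcd n l).divisors, μ d * (pPkl (n / d) k (l / d) : ℤ) := by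
  refine ⟨pPkl_eq_sum_gcd_divisors n k l, ?_⟩
  calc (pPsikl n k l : ℤ)
      = ∑ d ∈ (Nat.gcd n l).divisors, μ d *
          ∑ e ∈ (Nat.gcd n l / d).divisors, (pPsikl (n / (d * e)) k (l / (d * e)) : ℤ) := by
        simpa using (sum_moebius_mul_sum_divisors_div (Nat.gcd_pos_of_pos_right n hl).ne'
          fun e => (pPsikl (n / e) k (l / e) : ℤ)).symm
    _ = _ := Finset.sum_congr rfl fun d hd => by
      have hdN := Nat.dvd_of_mem_divisors hd
      rw [pPkl_eq_sum_gcd_divisors, Nat.gcd_div (hdN.trans (Nat.gcd_dvd_left n l))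
        (hdN.trans (Nat.gcd_dvd_right n l))]
      push_cast [Nat.div_div_eq_div_mul]
      rfl

/-- for `l ≤ ⌊n/k⌋`, `p(n,k,l) = ∑_{d ∣ (n,l)} p_Ψ(n/d, k, l/d)` and
equivalently `p_Ψ(n,k,l) = ∑_{d ∣ (n,l)} μ(d) p(n/d, k, l/d)`. -/
theorem pkl_eq_sum_pPsikl (n k l : ℕ) (hn : 0 < n) (hk : 0 < k) (hl : 0 < l)
    (hlnk : l ≤ n / k) :
    pPkl n k l = ∑ d ∈ (Nat.gcd n l).divisors, pPsikl (n / d) k (l / d) ∧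
    (pPsikl n k l : ℤ) =
      ∑ d ∈ (Nat.gcd n l).divisors, μ d * (pPkl (n / d) k (l / d) : ℤ) :=
  pkl_eq_sum_pPsikl_general n k l hl
end

section
/- For all positive integers n, k, l, m with k > 1, p_{Ψ(m)}(n, k, l) = p_{Ψ(gcd(m,l))}(n − l, k − 1, ≥ l), i.e., the number of partitions of n into exactly k parts relatively prime to m with smallest part l equals the number of partitions of n − l into exactly k − 1 parts, each at least l, that are relatively prime to gcd(m, l). -/
open Finset ArithmeticFunction

/-
Deleting one copy of the smallest part `l` maps the partitions of `n` with smallest part `l`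
bijectively onto the partitions of `n - l` all of whose parts are at least `l`
(`Nat.Partition.partitionWithPartEquiv`). It lowers the number of parts by one, and since the
deleted part re-enters the gcd, `gcd (l, rest..., m) = gcd (rest..., gcd (m, l))`.
If `l > n`, both sides count nothing: `l` cannot be a part, and `n - l = 0` has no partition
into `k - 1 ≥ 1` parts.
-/

namespace Nat.Partition

theorem card_filter_mem_parts {n a : ℕ} (ha : 1 ≤ a) (han : a ≤ n) (P : Multiset ℕ → Prop)
    [DecidablePred P] :
    #{p : n.Partition | a ∈ p.parts ∧ P p.parts} =
      #{q : (n - a).Partition | P (a ::ₘ q.parts)} := by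
  let e := partitionWithPartEquiv ha han
  refine card_bij' (fun p hp => e ⟨p, (mem_filter.mp hp).2.1⟩) (fun q _ => (e.symm q).1)
    ?_ ?_ (fun p _ => congrArg Subtype.val (e.symm_apply_apply _))
    (fun q _ => e.apply_symm_apply q)
  · intro p hp
    simp only [mem_filter, mem_univ, true_and] at hp ⊢
    rw [partitionWithPartEquiv_apply_parts, Multiset.cons_erase hp.1]
    exact hp.2
  · intro q hq
    simp only [mem_filter, mem_univ, true_and] at hq ⊢
    rw [partitionWithPartEquiv_symm_apply_parts]
    exact ⟨Multiset.mem_cons_self _ _, hq⟩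

end Nat.Partition

theorem Nat.gcd_multisetGcd_cons (a m : ℕ) (s : Multiset ℕ) :
    Nat.gcd (a ::ₘ s).gcd m = Nat.gcd s.gcd (Nat.gcd m a) := by
  rw [Multiset.gcd_cons]
  change Nat.gcd (Nat.gcd a s.gcd) m = _
  rw [Nat.gcd_comm a, Nat.gcd_assoc, Nat.gcd_comm a m]

theorem pPsiMkl_eq_zero_of_lt {m n k l : ℕ} (h : n < l) : pPsiMkl m n k l = 0 :=
  card_eq_zero.mpr <| filter_eq_empty_iff.mpr fun _ _ hp =>
    h.not_ge (Nat.Partition.le_of_mem_parts hp.2.1.1)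

theorem pPsiMkge_zero {m k l : ℕ} (hk : k ≠ 0) : pPsiMkge m 0 k l = 0 :=
  card_eq_zero.mpr <| filter_eq_empty_iff.mpr fun _ _ hp =>
    hk (by rw [← hp.1, Nat.Partition.partition_zero_parts, Multiset.card_zero])

theorem pPsiMkl_eq_pPsiMkge_general (n k l m : ℕ) (hk : 1 < k) (hl : 0 < l) :
    pPsiMkl m n k l = pPsiMkge (Nat.gcd m l) (n - l) (k - 1) l := by
  rcases lt_or_ge n l with hnl | hln
  · rw [pPsiMkl_eq_zero_of_lt hnl, Nat.sub_eq_zero_of_le hnl.le, pPsiMkge_zero (by omega)]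
  unfold pPsiMkl pPsiMkge
  convert Nat.Partition.card_filter_mem_parts hl hln
    (fun s => Multiset.card s = k ∧ (∀ x ∈ s, l ≤ x) ∧ Nat.gcd s.gcd m = 1) using 2
  · ext p
    simp only [mem_filter, mem_univ, true_and]
    tauto
  · ext q
    simp only [mem_filter, mem_univ, true_and, Multiset.card_cons, Multiset.forall_mem_cons,
      le_refl, Nat.gcd_multisetGcd_cons]
    rw [eq_tsub_iff_add_eq_of_le hk.le]

/-- for `k > 1`,
`p_{Ψ(m)}(n,k,l) = p_{Ψ(gcd(m,l))}(n - l, k - 1, ≥ l)`. -/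
theorem pPsiMkl_eq_pPsiMkge (n k l m : ℕ) (hn : 0 < n) (hk : 1 < k) (hl : 0 < l)
    (hm : 0 < m) :
    pPsiMkl m n k l = pPsiMkge (Nat.gcd m l) (n - l) (k - 1) l :=
  pPsiMkl_eq_pPsiMkge_general n k l m hk hl
end

section
/- Let n, m, l be positive integers with n ≥ 2 and l ≤ ⌊n/2⌋. Then p_{Ψ(m)}(n, 2, ≥ l) = Σ_{d | gcd(n,m)} μ(d)·(⌊n/(2d)⌋ − ⌊(l−1)/d⌋), where the sum ranges over positive common divisors d of n and m and μ is the Möbius function. -/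
open Finset ArithmeticFunction
open scoped ArithmeticFunction.Moebius

/-!
A partition of `n` into two parts is determined by its smaller part `b ∈ [l, n/2]`, and
`gcd(n - b, b, m) = gcd(b, gcd(n, m))`. So `p_{Ψ(m)}(n, 2, ≥ l)` counts the `b ∈ (l - 1, n/2]`
coprime to `gcd(n, m)`; Möbius inversion over the divisors `d` of `gcd(n, m)` turns this into
counts of multiples of `d` in `(l - 1, n/2]`, of which there are `⌊n/(2d)⌋ - ⌊(l - 1)/d⌋`.
-/

theorem Nat.card_filter_dvd_Ioc (a b d : ℕ) : #{x ∈ Ioc a b | d ∣ x} = b / d - a / d := by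
  rcases le_total a b with hab | hba
  · have hsplit :
        #{x ∈ Ioc 0 a | d ∣ x} + #{x ∈ Ioc a b | d ∣ x} = #{x ∈ Ioc 0 b | d ∣ x} := by
      rw [← card_union_of_disjoint (disjoint_filter_filter (Ioc_disjoint_Ioc_of_le le_rfl)),
        ← filter_union, Ioc_union_Ioc_eq_Ioc a.zero_le hab]
    rw [Nat.Ioc_filter_dvd_card_eq_div, Nat.Ioc_filter_dvd_card_eq_div] at hsplit
    omega
  · rw [Ioc_eq_empty_of_le hba, filter_empty, card_empty,
      Nat.sub_eq_zero_of_le (Nat.div_le_div_right hba)]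

theorem ArithmeticFunction.sum_divisors_moebius (k : ℕ) :
    ∑ d ∈ k.divisors, μ d = if k = 1 then 1 else 0 := by
  rw [← coe_mul_zeta_apply, moebius_mul_coe_zeta, one_apply]

theorem ArithmeticFunction.ite_coprime_eq_sum_moebius {g : ℕ} (hg : g ≠ 0) (x : ℕ) :
    (if x.Coprime g then 1 else 0 : ℤ) =
      ∑ d ∈ g.divisors, μ d * if d ∣ x then 1 else 0 := by
  have hdvd : ∀ d ∈ g.divisors, (d ∣ x ↔ d ∣ x.gcd g) := fun d hd =>
    by rw [Nat.dvd_gcd_iff, and_iff_left (Nat.dvd_of_mem_divisors hd)]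
  simp_rw [mul_boole, ← sum_filter]
  rw [filter_congr hdvd, Nat.divisors_filter_dvd_of_dvd hg (Nat.gcd_dvd_right x g),
    sum_divisors_moebius]

theorem ArithmeticFunction.card_filter_coprime_eq_sum_moebius {g : ℕ} (hg : g ≠ 0)
    (s : Finset ℕ) :
    (#{x ∈ s | x.Coprime g} : ℤ) = ∑ d ∈ g.divisors, μ d * #{x ∈ s | d ∣ x} := by
  simp_rw [natCast_card_filter, ite_coprime_eq_sum_moebius hg, mul_sum]
  exact sum_comm

namespace Nat.Partition

def pair (n b : ℕ) (hb : 0 < b) (hbn : b < n) : n.Partition where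
  parts := {n - b, b}
  parts_pos := by
    intro x hx
    rw [Multiset.insert_eq_cons, Multiset.mem_cons, Multiset.mem_singleton] at hx
    omega
  parts_sum := by
    rw [Multiset.insert_eq_cons, Multiset.sum_cons, Multiset.sum_singleton]
    omega

variable {n b : ℕ} {hb : 0 < b} {hbn : b < n}

theorem mem_pair_parts {x : ℕ} : x ∈ (pair n b hb hbn).parts ↔ x = n - b ∨ x = b := by
  simp [pair]

theorem card_pair_parts : Multiset.card (pair n b hb hbn).parts = 2 :=
  Multiset.card_pair _ _

theorem gcd_pair_parts : (pair n b hb hbn).parts.gcd = n.gcd b := by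
  simp only [pair, Multiset.insert_eq_cons, Multiset.gcd_cons, Multiset.gcd_singleton,
    normalize_eq]
  exact Nat.gcd_sub_self_left hbn.le

theorem eq_of_pair_eq_pair {b' : ℕ} {hb' : 0 < b'} {hbn' : b' < n} (hb_half : b ≤ n / 2)
    (hb'_half : b' ≤ n / 2)
    (h : pair n b hb hbn = pair n b' hb' hbn') : b = b' := by
  have hmem : b ∈ (pair n b' hb' hbn').parts := h ▸ mem_pair_parts.2 (Or.inr rfl)
  rw [mem_pair_parts] at hmem
  omega

theorem exists_eq_pair_of_card_parts_eq_two (p : n.Partition)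
    (hp : Multiset.card p.parts = 2) :
    ∃ b, ∃ (hb : 0 < b) (hbn : b < n), b ≤ n / 2 ∧ p = pair n b hb hbn := by
  obtain ⟨x, y, hxy⟩ := Multiset.card_eq_two.1 hp
  wlog hyx : y ≤ x generalizing x y
  · exact this y x (hxy.trans (Multiset.pair_comm x y)) (by omega)
  have hsum : x + y = n := by simpa [hxy] using p.parts_sum
  have hy : 0 < y := p.parts_pos (by simp [hxy])
  refine ⟨y, hy, by omega, by omega, Nat.Partition.ext ?_⟩
  change p.parts = {n - y, y}
  rw [hxy, ← hsum, Nat.add_sub_cancel]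

end Nat.Partition

theorem pPsiMkge_two_eq_card_filter_coprime (m n l : ℕ) (hl : 0 < l) :
    pPsiMkge m n 2 l = #{b ∈ Icc l (n / 2) | b.Coprime (n.gcd m)} := by
  have hcop : ∀ b, (n.gcd b).gcd m = 1 ↔ b.Coprime (n.gcd m) := fun b => by
    rw [Nat.gcd_comm n b, Nat.gcd_assoc, Nat.Coprime]
  symm
  have hmem : ∀ b ∈ Icc l (n / 2), 0 < b ∧ b < n := fun b hb => by
    rw [mem_Icc] at hb
    omega
  refine card_bij (fun b hb => Nat.Partition.pair n b
    (hmem b (mem_filter.1 hb).1).1 (hmem b (mem_filter.1 hb).1).2) ?_ ?_ ?_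
  · intro b hb
    simp only [mem_filter, mem_Icc, mem_univ, true_and] at hb ⊢
    refine ⟨Nat.Partition.card_pair_parts, fun x hx => ?_, ?_⟩
    · rw [Nat.Partition.mem_pair_parts] at hx
      omega
    · rw [Nat.Partition.gcd_pair_parts, hcop]
      exact hb.2
  · intro b hb b' hb' h
    simp only [mem_filter, mem_Icc] at hb hb'
    exact Nat.Partition.eq_of_pair_eq_pair hb.1.2 hb'.1.2 h
  · intro p hp
    simp only [mem_filter, mem_univ, true_and] at hp
    obtain ⟨hcard, hge, hgcd⟩ := hp
    obtain ⟨b, hb, hbn, hb_half, rfl⟩ := p.exists_eq_pair_of_card_parts_eq_two hcard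
    rw [Nat.Partition.gcd_pair_parts, hcop] at hgcd
    have hlb : l ≤ b := hge b (Nat.Partition.mem_pair_parts.2 (Or.inr rfl))
    exact ⟨b, mem_filter.2 ⟨mem_Icc.2 ⟨hlb, hb_half⟩, hgcd⟩, rfl⟩

theorem base_case_general (n m l : ℕ) (hl : 0 < l)
    (hln : l ≤ n / 2) :
    (pPsiMkge m n 2 l : ℤ) =
      ∑ d ∈ (Nat.gcd n m).divisors,
        μ d * ((n : ℤ) / (2 * (d : ℤ)) - ((l : ℤ) - 1) / (d : ℤ)) := by
  obtain ⟨k, rfl⟩ : ∃ k, l = k + 1 := ⟨l - 1, by omega⟩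
  have hg : n.gcd m ≠ 0 := (Nat.gcd_pos_of_pos_left m (by omega)).ne'
  rw [pPsiMkge_two_eq_card_filter_coprime _ _ _ hl, Icc_add_one_left_eq_Ioc,
    card_filter_coprime_eq_sum_moebius hg]
  refine sum_congr rfl fun d _ => congrArg (μ d * ·) ?_
  rw [Nat.card_filter_dvd_Ioc, Nat.cast_sub (Nat.div_le_div_right (by omega)),
    Nat.div_div_eq_div_mul, Int.natCast_div, Int.natCast_div]
  push_cast [add_sub_cancel_right]
  rfl

/-- for `n ≥ 2` and `l ≤ ⌊n/2⌋`,
`p_{Ψ(m)}(n, 2, ≥ l) = ∑_{d ∣ (n,m)} μ(d) (⌊n/(2d)⌋ - ⌊(l-1)/d⌋)`. -/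
theorem base_case (n m l : ℕ) (hn : 2 ≤ n) (hm : 0 < m) (hl : 0 < l)
    (hln : l ≤ n / 2) :
    (pPsiMkge m n 2 l : ℤ) =
      ∑ d ∈ (Nat.gcd n m).divisors,
        μ d * ((n : ℤ) / (2 * (d : ℤ)) - ((l : ℤ) - 1) / (d : ℤ)) :=
  base_case_general n m l hl hln
end
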